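/- Let k be a field, K/k a finite extension of degree r, L/k a finite extension whose degree is divisible by N·d!, where N, d are positive integers with r ≤ d. Let M be any field which is a quotient of the k-algebra L ⊗_k K (i.e. there is a surjective k-algebra homomorphism L ⊗_k K → M). Then M is a finite extension of K (via the induced map K → M) and N divides the degree [M:K]. -/

import Mathlib

open scoped TensorProduct

/-!
Both `K` and `L` embed into `M` over `k`, so by the tower law `[M:k] = [K:k]·[M:K]` is a multiple
of `[L:k]`, hence of `N·d!`. As `[K:k] = r ≤ d` divides `d!`, cancelling `r` leaves `N ∣ [M:K]`.
-/

theorem Nat.dvd_of_mul_factorial_dvd_mul {N d r m : ℕ} (hr : 0 < r) (hrd : r ≤ d)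
    (h : N * Nat.factorial d ∣ r * m) : N ∣ m := by
  obtain ⟨s, hs⟩ := Nat.dvd_factorial hr hrd
  rw [hs, mul_left_comm] at h
  exact (Dvd.intro s rfl).trans (Nat.dvd_of_mul_dvd_mul_left hr h)

theorem AlgHom.finrank_dvd_finrank {k L M : Type*} [Field k] [Field L] [CommRing M] [Algebra k L]
    [Algebra k M] (f : L →ₐ[k] M) : Module.finrank k L ∣ Module.finrank k M := by
  let := f.toAlgebra
  have : IsScalarTower k L M := .of_algebraMap_eq fun x => (f.commutes x).symm
  exact Module.finrank_dvd_finrank_right k L M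

theorem stmt_2_general {k K L M : Type*} [Field k] [Field K] [Field L] [Field M] [Algebra k M]
    [Algebra k K] [Algebra k L] [FiniteDimensional k K] [FiniteDimensional k L]
    (N d r : ℕ) (hr : Module.finrank k K = r)
    (hrd : r ≤ d) (hL : N * Nat.factorial d ∣ Module.finrank k L)
    (φ : (L ⊗[k] K) →ₐ[k] M) (hφ : Function.Surjective φ) :
    letI : Algebra K M :=
      ((φ.toRingHom.comp (Algebra.TensorProduct.includeRight : K →ₐ[k] L ⊗[k] K).toRingHom)).toAlgebra
    FiniteDimensional K M ∧ N ∣ Module.finrank K M := by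
  let : Algebra K M :=
    ((φ.toRingHom.comp (Algebra.TensorProduct.includeRight : K →ₐ[k] L ⊗[k] K).toRingHom)).toAlgebra
  have : IsScalarTower k K M := .of_algebraMap_eq fun x =>
    ((φ.comp Algebra.TensorProduct.includeRight).commutes x).symm
  have : Module.Finite k M := .of_surjective φ.toLinearMap hφ
  have : Module.Finite K M := .of_restrictScalars_finite k K M
  refine ⟨inferInstance, Nat.dvd_of_mul_factorial_dvd_mul (hr ▸ Module.finrank_pos) hrd ?_⟩
  rw [← hr, Module.finrank_mul_finrank]
  exact hL.trans (φ.comp Algebra.TensorProduct.includeLeft).finrank_dvd_finrank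

/-- Let `k` be a field, `K/k` a finite extension of degree `r`, `L/k` a finite
extension whose degree is divisible by `N * d!`, where `N`, `d` are positive
integers with `r ≤ d`.  Let `M` be any field which is a quotient of the
`k`-algebra `L ⊗[k] K`.  Then `M` is a finite extension of `K` (via the induced
map `K → M`) and `N` divides the degree `[M:K]`. -/
theorem stmt_2 {k K L M : Type*} [Field k] [Field K] [Field L] [Field M] [Algebra k M]
    [Algebra k K] [Algebra k L] [FiniteDimensional k K] [FiniteDimensional k L]
    (N d r : ℕ) (hN : 0 < N) (hd : 0 < d) (hr : Module.finrank k K = r)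
    (hrd : r ≤ d) (hL : N * Nat.factorial d ∣ Module.finrank k L)
    (φ : (L ⊗[k] K) →ₐ[k] M) (hφ : Function.Surjective φ) :
    letI : Algebra K M :=
      ((φ.toRingHom.comp (Algebra.TensorProduct.includeRight : K →ₐ[k] L ⊗[k] K).toRingHom)).toAlgebra
    FiniteDimensional K M ∧ N ∣ Module.finrank K M :=
  stmt_2_general N d r hr hrd hL φ hφ
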